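/- arXiv:cond-mat/0607340 — 4 statements merged into one kernel-verified Lean document; each statement's English description precedes it below -/
import Mathlib

section
/- Let N(n) = n(n+1)(n+2)/3 and λ(n) = (n−1)n(n+1)(n+2)/4 for positive integers n, and define C(n) = √(2/3)·(256/(315π³))·N(n)^{3/2}·Γ(λ(n) + 3N(n)/2) / Γ(λ(n) + 3(N(n)−1)/2), where Γ is the real Gamma function. Then C(n) / (√(2/3)·(32/(35π³))·N(n)^{7/2}) tends to 1 as n → ∞; equivalently, C(n)/N(n)^{7/2} converges to √(2/3)·32/(35π³) ≈ 0.02408. -/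
open Filter Real

/-- Midpoint log-convexity of the Gamma function. -/
lemma gamma_log_mid {a b : ℝ} (ha : 0 < a) (hb : 0 < b) :
    Real.log (Real.Gamma ((a + b) / 2)) ≤
      (Real.log (Real.Gamma a) + Real.log (Real.Gamma b)) / 2 := by
  have h := Real.convexOn_log_Gamma.2 (Set.mem_Ioi.2 ha) (Set.mem_Ioi.2 hb)
    (by norm_num : (0:ℝ) ≤ 1/2) (by norm_num : (0:ℝ) ≤ 1/2) (by norm_num)
  simp only [smul_eq_mul, Function.comp_apply] at h
  rw [show (1/2:ℝ) * a + 1/2 * b = (a + b) / 2 by ring] at h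
  linarith

/-- Gautschi-type upper bound. -/
lemma gautschi_upper {x : ℝ} (hx : 0 < x) :
    Real.Gamma (x + 1/2) ≤ Real.Gamma x * Real.sqrt x := by
  have h := gamma_log_mid hx (by linarith : (0:ℝ) < x + 1)
  rw [show (x + (x+1))/2 = x + 1/2 by ring, Real.Gamma_add_one hx.ne',
    Real.log_mul hx.ne' (Real.Gamma_pos_of_pos hx).ne'] at h
  have h2 : Real.log (Real.Gamma (x + 1/2)) ≤ Real.log (Real.Gamma x * Real.sqrt x) := by
    rw [Real.log_mul (Real.Gamma_pos_of_pos hx).ne'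
      (Real.sqrt_pos.2 hx).ne', Real.log_sqrt hx.le]
    linarith
  have hp1 : 0 < Real.Gamma (x + 1/2) := Real.Gamma_pos_of_pos (by linarith)
  have hp2 : 0 < Real.Gamma x * Real.sqrt x :=
    mul_pos (Real.Gamma_pos_of_pos hx) (Real.sqrt_pos.2 hx)
  calc Real.Gamma (x + 1/2) = Real.exp (Real.log (Real.Gamma (x + 1/2))) :=
        (Real.exp_log hp1).symm
    _ ≤ Real.exp (Real.log (Real.Gamma x * Real.sqrt x)) := Real.exp_le_exp.2 h2
    _ = Real.Gamma x * Real.sqrt x := Real.exp_log hp2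

/-- Gautschi-type lower bound. -/
lemma gautschi_lower {x : ℝ} (hx : 0 < x) :
    x * Real.Gamma x ≤ Real.Gamma (x + 1/2) * Real.sqrt (x + 1/2) := by
  have h := gamma_log_mid (by linarith : (0:ℝ) < x + 1/2) (by linarith : (0:ℝ) < x + 3/2)
  rw [show ((x + 1/2) + (x + 3/2))/2 = x + 1 by ring] at h
  have e1 : Real.Gamma (x + 1) = x * Real.Gamma x := Real.Gamma_add_one hx.ne'
  have e2 : Real.Gamma (x + 3/2) = (x + 1/2) * Real.Gamma (x + 1/2) := by
    rw [show x + 3/2 = (x + 1/2) + 1 by ring, Real.Gamma_add_one (by linarith : x + 1/2 ≠ 0)]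
  have hpx : 0 < Real.Gamma x := Real.Gamma_pos_of_pos hx
  have hph : 0 < Real.Gamma (x + 1/2) := Real.Gamma_pos_of_pos (by linarith)
  rw [e1, e2, Real.log_mul hx.ne' hpx.ne',
    Real.log_mul (by linarith : x + 1/2 ≠ 0) hph.ne'] at h
  have h2 : Real.log (x * Real.Gamma x) ≤
      Real.log (Real.Gamma (x + 1/2) * Real.sqrt (x + 1/2)) := by
    rw [Real.log_mul hx.ne' hpx.ne',
      Real.log_mul hph.ne' (Real.sqrt_pos.2 (by linarith)).ne',
      Real.log_sqrt (by linarith)]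
    linarith
  have hp1 : 0 < x * Real.Gamma x := mul_pos hx hpx
  have hp2 : 0 < Real.Gamma (x + 1/2) * Real.sqrt (x + 1/2) :=
    mul_pos hph (Real.sqrt_pos.2 (by linarith))
  calc x * Real.Gamma x = Real.exp (Real.log (x * Real.Gamma x)) := (Real.exp_log hp1).symm
    _ ≤ Real.exp (Real.log (Real.Gamma (x + 1/2) * Real.sqrt (x + 1/2))) := Real.exp_le_exp.2 h2
    _ = Real.Gamma (x + 1/2) * Real.sqrt (x + 1/2) := Real.exp_log hp2

/-- The normalized ratio `Γ(x+3/2)/(Γ(x)·x^{3/2})`. -/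
noncomputable def Gr (x : ℝ) : ℝ :=
  Real.Gamma (x + 3/2) / (Real.Gamma x * x ^ ((3:ℝ)/2))

lemma rpow_three_half {x : ℝ} (hx : 0 < x) : x ^ ((3:ℝ)/2) = x * Real.sqrt x := by
  rw [show (3:ℝ)/2 = 1 + 1/2 by norm_num, Real.rpow_add hx, Real.rpow_one,
    Real.sqrt_eq_rpow]

lemma Gr_ge_one {x : ℝ} (hx : 0 < x) : 1 ≤ Gr x := by
  have hpx : 0 < Real.Gamma x := Real.Gamma_pos_of_pos hx
  have hph : 0 < Real.Gamma (x + 1/2) := Real.Gamma_pos_of_pos (by linarith)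
  have hs : 0 < Real.sqrt x := Real.sqrt_pos.2 hx
  have ht : 0 < Real.sqrt (x + 1/2) := Real.sqrt_pos.2 (by linarith)
  have hs2 : Real.sqrt x ^ 2 = x := Real.sq_sqrt hx.le
  have ht2 : Real.sqrt (x + 1/2) ^ 2 = x + 1/2 := Real.sq_sqrt (by linarith)
  have hst : Real.sqrt x ≤ Real.sqrt (x + 1/2) := Real.sqrt_le_sqrt (by linarith)
  have e2 : Real.Gamma (x + 3/2) = (x + 1/2) * Real.Gamma (x + 1/2) := by
    rw [show x + 3/2 = (x + 1/2) + 1 by ring, Real.Gamma_add_one (by linarith : x + 1/2 ≠ 0)]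
  have hg := gautschi_lower hx
  rw [Gr, rpow_three_half hx, le_div_iff₀ (by positivity), one_mul, e2]
  nlinarith [mul_le_mul_of_nonneg_right hg ht.le, ht2,
    mul_le_mul_of_nonneg_left hst (mul_pos hpx hx).le]

lemma Gr_le {x : ℝ} (hx : 0 < x) : Gr x ≤ 1 + 1/2 * x⁻¹ := by
  have hpx : 0 < Real.Gamma x := Real.Gamma_pos_of_pos hx
  have hs : 0 < Real.sqrt x := Real.sqrt_pos.2 hx
  have e2 : Real.Gamma (x + 3/2) = (x + 1/2) * Real.Gamma (x + 1/2) := by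
    rw [show x + 3/2 = (x + 1/2) + 1 by ring, Real.Gamma_add_one (by linarith : x + 1/2 ≠ 0)]
  have hg := gautschi_upper hx
  rw [Gr, rpow_three_half hx, div_le_iff₀ (by positivity), e2]
  have key : (x + 1/2) * Real.Gamma (x + 1/2) ≤ (x + 1/2) * (Real.Gamma x * Real.sqrt x) :=
    mul_le_mul_of_nonneg_left hg (by linarith)
  have : (1 + 1/2 * x⁻¹) * (Real.Gamma x * (x * Real.sqrt x))
      = (x + 1/2) * (Real.Gamma x * Real.sqrt x) := by
    field_simp
  linarith [key, this.ge]


noncomputable def xfun (n : ℕ) : ℝ :=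
  ((n : ℝ) - 1) * n * (n + 1) * (n + 2) / 4
    + 3 * (((n : ℝ) * (n + 1) * (n + 2) / 3) - 1) / 2

noncomputable def Nfun (n : ℕ) : ℝ := (n : ℝ) * (n + 1) * (n + 2) / 3

lemma xfun_pos {n : ℕ} (hn : 1 ≤ n) : 0 < xfun n := by
  have hm : (1:ℝ) ≤ (n:ℝ) := by exact_mod_cast hn
  unfold xfun
  nlinarith [hm, sq_nonneg ((n:ℝ) - 1), sq_nonneg ((n:ℝ) + 1)]

lemma Nfun_pos {n : ℕ} (hn : 1 ≤ n) : 0 < Nfun n := by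
  have hm : (1:ℝ) ≤ (n:ℝ) := by exact_mod_cast hn
  unfold Nfun
  have h0 : (0:ℝ) < (n:ℝ) := by linarith
  have h1 : (0:ℝ) < (n:ℝ) + 1 := by linarith
  have h2 : (0:ℝ) < (n:ℝ) + 2 := by linarith
  positivity

lemma xfun_ge {n : ℕ} (hn : 1 ≤ n) : (n : ℝ) ≤ xfun n := by
  have hm : (1:ℝ) ≤ (n:ℝ) := by exact_mod_cast hn
  unfold xfun
  have h2 : (1:ℝ) ≤ (n:ℝ)^2 := by nlinarith
  have h3 : (n:ℝ) ≤ (n:ℝ)^3 := by nlinarith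
  have h4 : (1:ℝ) ≤ (n:ℝ)^4 := by nlinarith
  nlinarith [hm, h2, h3, h4]

lemma xfun_atTop : Filter.Tendsto xfun Filter.atTop Filter.atTop := by
  apply Filter.tendsto_atTop_mono' _ _ tendsto_natCast_atTop_atTop
  filter_upwards [Filter.eventually_ge_atTop 1] with n hn
  exact xfun_ge hn

lemma tendsto_xfun_div : Filter.Tendsto (fun n : ℕ => xfun n / (n:ℝ)^4)
    Filter.atTop (nhds (1/4)) := by
  have hu : Filter.Tendsto (fun n : ℕ => ((n:ℝ))⁻¹) Filter.atTop (nhds 0) :=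
    tendsto_inv_atTop_zero.comp tendsto_natCast_atTop_atTop
  have hp : Filter.Tendsto (fun t : ℝ => 1/4 + t + 5/4 * t^2 + 1/2 * t^3 - 3/2 * t^4)
      (nhds 0) (nhds (1/4)) := by
    have hc : ContinuousAt (fun t : ℝ => 1/4 + t + 5/4 * t^2 + 1/2 * t^3 - 3/2 * t^4) 0 := by
      fun_prop
    have := hc.tendsto
    norm_num at this
    exact this
  refine (hp.comp hu).congr' ?_
  filter_upwards [Filter.eventually_ge_atTop 1] with n hn
  have hm : (0:ℝ) < (n:ℝ) := by exact_mod_cast hn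
  simp only [Function.comp_apply]
  unfold xfun
  field_simp
  ring

lemma tendsto_Nfun_div : Filter.Tendsto (fun n : ℕ => Nfun n / (n:ℝ)^3)
    Filter.atTop (nhds (1/3)) := by
  have hu : Filter.Tendsto (fun n : ℕ => ((n:ℝ))⁻¹) Filter.atTop (nhds 0) :=
    tendsto_inv_atTop_zero.comp tendsto_natCast_atTop_atTop
  have hp : Filter.Tendsto (fun t : ℝ => 1/3 + t + 2/3 * t^2) (nhds 0) (nhds (1/3)) := by
    have hc : ContinuousAt (fun t : ℝ => 1/3 + t + 2/3 * t^2) 0 := by fun_prop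
    have := hc.tendsto
    norm_num at this
    exact this
  refine (hp.comp hu).congr' ?_
  filter_upwards [Filter.eventually_ge_atTop 1] with n hn
  have hm : (0:ℝ) < (n:ℝ) := by exact_mod_cast hn
  simp only [Function.comp_apply]
  unfold Nfun
  field_simp
  ring

lemma tendsto_H : Filter.Tendsto
    (fun n : ℕ => (8/9 : ℝ) * Real.sqrt ((xfun n / (n:ℝ)^4)^3 / ((Nfun n / (n:ℝ)^3)^4)))
    Filter.atTop (nhds 1) := by
  have hr : Filter.Tendsto
      (fun n : ℕ => (xfun n / (n:ℝ)^4)^3 / ((Nfun n / (n:ℝ)^3)^4))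
      Filter.atTop (nhds (81/64)) := by
    have h1 := (tendsto_xfun_div.pow 3).div (tendsto_Nfun_div.pow 4) (by norm_num)
    norm_num at h1
    exact h1
  have hsq := (Real.continuous_sqrt.tendsto (81/64 : ℝ)).comp hr
  have h98 : Real.sqrt (81/64 : ℝ) = 9/8 := by
    rw [show (81:ℝ)/64 = (9/8)^2 by norm_num, Real.sqrt_sq (by norm_num : (0:ℝ) ≤ 9/8)]
  have h := hsq.const_mul (8/9 : ℝ)
  rw [h98] at h
  norm_num at h
  exact h

lemma tendsto_Gr_xfun : Filter.Tendsto (fun n => Gr (xfun n)) Filter.atTop (nhds 1) := by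
  have hup : Filter.Tendsto (fun n => 1 + 1/2 * (xfun n)⁻¹) Filter.atTop (nhds 1) := by
    have h0 := ((tendsto_inv_atTop_zero.comp xfun_atTop).const_mul (1/2 : ℝ)).const_add (1:ℝ)
    norm_num at h0
    exact h0
  refine tendsto_of_tendsto_of_tendsto_of_le_of_le' tendsto_const_nhds hup ?_ ?_
  · filter_upwards [Filter.eventually_ge_atTop 1] with n hn
    exact Gr_ge_one (xfun_pos hn)
  · filter_upwards [Filter.eventually_ge_atTop 1] with n hn
    exact Gr_le (xfun_pos hn)

set_option maxHeartbeats 1000000 in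
/-- Large-`N` limit of the s-wave interaction constant `C_N`: with
`N(n) = n(n+1)(n+2)/3`, `λ(n) = (n−1)n(n+1)(n+2)/4`, and
`C(n) = √(2/3)·(256/(315π³))·N(n)^{3/2}·Γ(λ(n)+3N(n)/2)/Γ(λ(n)+3(N(n)−1)/2)`,
the ratio `C(n) / (√(2/3)·(32/(35π³))·N(n)^{7/2})` tends to `1` as `n → ∞`;
equivalently `C_N/N^{7/2} → √(2/3)·32/(35π³) ≈ 0.02408`. -/
theorem CN_large_N_limit :
    Filter.Tendsto (fun n : ℕ =>
      (Real.sqrt (2 / 3) * (256 / (315 * Real.pi ^ 3)) *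
          ((n : ℝ) * (n + 1) * (n + 2) / 3) ^ ((3 : ℝ) / 2) *
          Real.Gamma (((n : ℝ) - 1) * n * (n + 1) * (n + 2) / 4
            + 3 * ((n : ℝ) * (n + 1) * (n + 2) / 3) / 2) /
          Real.Gamma (((n : ℝ) - 1) * n * (n + 1) * (n + 2) / 4
            + 3 * (((n : ℝ) * (n + 1) * (n + 2) / 3) - 1) / 2)) /
        (Real.sqrt (2 / 3) * (32 / (35 * Real.pi ^ 3)) *
          ((n : ℝ) * (n + 1) * (n + 2) / 3) ^ ((7 : ℝ) / 2)))
      Filter.atTop (nhds 1) := by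
  have hmain := tendsto_Gr_xfun.mul tendsto_H
  rw [mul_one] at hmain
  refine hmain.congr' ?_
  filter_upwards [Filter.eventually_ge_atTop 1] with n hn
  have hm : (0:ℝ) < (n:ℝ) := by exact_mod_cast hn
  have hxp : 0 < xfun n := xfun_pos hn
  have hNp : 0 < Nfun n := Nfun_pos hn
  have hπ : Real.pi ≠ 0 := Real.pi_ne_zero
  have hΓ : Real.Gamma (xfun n) ≠ 0 := (Real.Gamma_pos_of_pos hxp).ne'
  have hsq23 : Real.sqrt (2/3 : ℝ) ≠ 0 := by positivity
  have hsqx : 0 < Real.sqrt (xfun n) := Real.sqrt_pos.2 hxp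
  have hsqN : 0 < Real.sqrt (Nfun n) := Real.sqrt_pos.2 hNp
  have harg : (xfun n / (n:ℝ)^4)^3 / ((Nfun n / (n:ℝ)^3)^4) = xfun n ^3 / Nfun n ^4 := by
    field_simp
  have h1 : Real.sqrt (xfun n ^3 / Nfun n ^4) = xfun n * Real.sqrt (xfun n) / Nfun n ^2 := by
    rw [show xfun n ^3 / Nfun n ^4 = (xfun n * Real.sqrt (xfun n) / Nfun n ^2)^2 by
        rw [div_pow, mul_pow, Real.sq_sqrt hxp.le]; ring]
    exact Real.sqrt_sq (by positivity)
  have h2 : xfun n ^ ((3:ℝ)/2) = xfun n * Real.sqrt (xfun n) := rpow_three_half hxp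
  have h3 : Nfun n ^ ((7:ℝ)/2) = Nfun n ^ ((3:ℝ)/2) * Nfun n ^2 := by
    rw [← Real.rpow_natCast (Nfun n) 2, ← Real.rpow_add hNp]
    norm_num
  have h4 : Nfun n ^ ((3:ℝ)/2) = Nfun n * Real.sqrt (Nfun n) := rpow_three_half hNp
  have hnum : (((n:ℝ) - 1) * n * (n + 1) * (n + 2) / 4
      + 3 * ((n : ℝ) * (n + 1) * (n + 2) / 3) / 2) = xfun n + 3/2 := by
    unfold xfun; ring
  show Gr (xfun n) * ((8/9 : ℝ) * Real.sqrt ((xfun n / (n:ℝ)^4)^3 / ((Nfun n / (n:ℝ)^3)^4))) = _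
  rw [harg, h1, Gr, h2]
  show _ = (Real.sqrt (2 / 3) * (256 / (315 * Real.pi ^ 3)) * Nfun n ^ ((3 : ℝ) / 2) *
          Real.Gamma (((n : ℝ) - 1) * n * (n + 1) * (n + 2) / 4
            + 3 * ((n : ℝ) * (n + 1) * (n + 2) / 3) / 2) /
          Real.Gamma (xfun n)) /
        (Real.sqrt (2 / 3) * (32 / (35 * Real.pi ^ 3)) * Nfun n ^ ((7 : ℝ) / 2))
  rw [hnum, h3, h4]
  field_simp
  ring
end

section
/- Let σ = 1024/(2835·π³), let t be real, and let V(R) = 1/(2R²) + R²/2 + σ·t/R³ on (0, ∞). If R₀ > 0 satisfies V′(R₀) = 0, then 4 + 3·σ·t/R₀⁵ = 5 − 1/R₀⁴. That is, the sum-rule breathing-mode prediction ω₀^B = √(4 + 3σ·k_fγ/R_min⁵) agrees exactly with the hyperspherical prediction ω₀^B = √(5 − 1/R_min⁴) at any stationary point of the effective potential. -/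
/-! At a stationary point `R` of `1/(2R²) + R²/2 + c/R³` one has `3c = R⁵ − R`; substituting this
into `4 + 3c/R⁵` gives `4 + 1 − 1/R⁴`. -/

namespace HyperradialPotential

/-- The paper's `V`, with `c` standing for `σ k_f γ`. -/
noncomputable def potential (c R : ℝ) : ℝ := 1 / (2 * R ^ 2) + R ^ 2 / 2 + c / R ^ 3

theorem hasDerivAt_potential (c : ℝ) {R : ℝ} (hR : R ≠ 0) :
    HasDerivAt (potential c) (-1 / R ^ 3 + R - 3 * c / R ^ 4) R := by
  have hcentr : HasDerivAt (fun x : ℝ => 1 / (2 * x ^ 2)) (-1 / R ^ 3) R :=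
    ((hasDerivAt_const R (1 : ℝ)).div ((hasDerivAt_pow 2 R).const_mul 2)
      (by positivity)).congr_deriv (by field_simp; ring)
  have htrap : HasDerivAt (fun x : ℝ => x ^ 2 / 2) R R :=
    ((hasDerivAt_pow 2 R).div_const 2).congr_deriv (by ring)
  have hinter : HasDerivAt (fun x : ℝ => c / x ^ 3) (-(3 * c) / R ^ 4) R :=
    ((hasDerivAt_const R c).div (hasDerivAt_pow 3 R) (pow_ne_zero 3 hR)).congr_deriv
      (by field_simp; ring)
  exact ((hcentr.add htrap).add hinter).congr_deriv (by ring)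

theorem three_mul_eq_of_deriv_eq_zero {c R : ℝ} (hR : R ≠ 0)
    (hstat : deriv (potential c) R = 0) : 3 * c = R ^ 5 - R := by
  rw [(hasDerivAt_potential c hR).deriv] at hstat
  field_simp at hstat
  linear_combination -hstat

theorem sumRule_eq_curvature {c R : ℝ} (hR : R ≠ 0) (hc : 3 * c = R ^ 5 - R) :
    4 + 3 * c / R ^ 5 = 5 - 1 / R ^ 4 := by
  rw [hc]
  field_simp
  ring

end HyperradialPotential

theorem sum_rule_agrees_with_curvature_general (σ t : ℝ)
    (V : ℝ → ℝ) (hV : ∀ R : ℝ, V R = 1 / (2 * R ^ 2) + R ^ 2 / 2 + σ * t / R ^ 3)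
    (R₀ : ℝ) (hR₀ : 0 < R₀) (hstat : deriv V R₀ = 0) :
    4 + 3 * σ * t / R₀ ^ 5 = 5 - 1 / R₀ ^ 4 := by
  have hV_eq : V = HyperradialPotential.potential (σ * t) := funext hV
  rw [hV_eq] at hstat
  rw [mul_assoc]
  exact HyperradialPotential.sumRule_eq_curvature hR₀.ne'
    (HyperradialPotential.three_mul_eq_of_deriv_eq_zero hR₀.ne' hstat)

/-- Agreement of the sum-rule and hyperspherical breathing-mode predictions:
with `σ = 1024/(2835π³)` and `V(R) = 1/(2R²) + R²/2 + σt/R³`, if `R₀ > 0` and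
`V′(R₀) = 0` then `4 + 3σt/R₀⁵ = 5 − 1/R₀⁴`. -/
theorem sum_rule_agrees_with_curvature (σ t : ℝ) (hσ : σ = 1024 / (2835 * Real.pi ^ 3))
    (V : ℝ → ℝ) (hV : ∀ R : ℝ, V R = 1 / (2 * R ^ 2) + R ^ 2 / 2 + σ * t / R ^ 3)
    (R₀ : ℝ) (hR₀ : 0 < R₀) (hstat : deriv V R₀ = 0) :
    4 + 3 * σ * t / R₀ ^ 5 = 5 - 1 / R₀ ^ 4 :=
  sum_rule_agrees_with_curvature_general σ t V hV R₀ hR₀ hstat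
end

section
/- Let σ = 1024/(2835·π³), let t be real, let V(R) = 1/(2R²) + R²/2 + σ·t/R³ on (0, ∞), and let t_c = −(189·π³/256)·5^{−1/4}. Then: (i) if t > 0, there is exactly one R > 0 with V′(R) = 0; (ii) if t_c < t < 0, there are exactly two distinct R > 0 with V′(R) = 0; (iii) if t < t_c, there is no R > 0 with V′(R) = 0; and (iv) if t = 0, the unique positive stationary point is R = 1. -/
section StationaryAux

private lemma quintic_deriv (x : ℝ) :
    deriv (fun R : ℝ => R^5 - R) x = 5*x^4 - 1 := by
  have h : HasDerivAt (fun R : ℝ => R^5 - R) (5*x^4 - 1) x := by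
    have := (hasDerivAt_pow 5 x).sub (hasDerivAt_id x)
    exact this.congr_deriv (by norm_num)
  exact h.deriv

private lemma quintic_anti {a : ℝ} (_ha : 0 < a) (ha4 : a^4 = 1/5) :
    StrictAntiOn (fun R : ℝ => R^5 - R) (Set.Icc 0 a) := by
  apply strictAntiOn_of_deriv_neg (convex_Icc _ _)
    (Continuous.continuousOn (by continuity))
  intro x hx
  rw [interior_Icc] at hx
  rw [quintic_deriv]
  have hx4 : x^4 < a^4 := by
    apply pow_lt_pow_left₀ hx.2 hx.1.le; norm_num
  nlinarith

private lemma quintic_mono {a : ℝ} (ha : 0 < a) (ha4 : a^4 = 1/5) :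
    StrictMonoOn (fun R : ℝ => R^5 - R) (Set.Ici a) := by
  apply strictMonoOn_of_deriv_pos (convex_Ici _)
    (Continuous.continuousOn (by continuity))
  intro x hx
  rw [interior_Ici] at hx
  rw [quintic_deriv]
  have hx4 : a^4 < x^4 := by
    apply pow_lt_pow_left₀ hx ha.le; norm_num
  nlinarith

private lemma quintic_min {a : ℝ} (ha : 0 < a) (ha4 : a^4 = 1/5)
    {R : ℝ} (hR : 0 < R) : -4*a^5 ≤ R^5 - R := by
  have hcub : (0:ℝ) ≤ R^3 + 2*a*R^2 + 3*a^2*R + 4*a^3 := by positivity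
  have h5 : a^4 * R = R/5 := by rw [ha4]; ring
  nlinarith [mul_nonneg (sq_nonneg (R-a)) hcub, h5]

end StationaryAux

set_option maxHeartbeats 1600000 in
/-- Classification of stationary points of the large-`N` effective hyperradial
potential `V(R) = 1/(2R²) + R²/2 + σt/R³` with `σ = 1024/(2835π³)` and critical
coupling `t_c = −(189π³/256)·5^{−1/4}`:
(i) for `t > 0` there is exactly one positive stationary point;
(ii) for `t_c < t < 0` there are exactly two distinct positive stationary points;
(iii) for `t < t_c` there are none;
(iv) for `t = 0` the unique positive stationary point is `R = 1`. -/
theorem stationary_point_classification (σ t tc : ℝ)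
    (hσ : σ = 1024 / (2835 * Real.pi ^ 3))
    (htc : tc = -(189 * Real.pi ^ 3 / 256) * (5 : ℝ) ^ (-(1 : ℝ) / 4))
    (V : ℝ → ℝ) (hV : ∀ R : ℝ, V R = 1 / (2 * R ^ 2) + R ^ 2 / 2 + σ * t / R ^ 3) :
    (0 < t → ∃! R : ℝ, 0 < R ∧ deriv V R = 0) ∧
    (tc < t → t < 0 → ∃ R₁ R₂ : ℝ, 0 < R₁ ∧ 0 < R₂ ∧ R₁ ≠ R₂ ∧
      deriv V R₁ = 0 ∧ deriv V R₂ = 0 ∧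
      ∀ R : ℝ, 0 < R → deriv V R = 0 → R = R₁ ∨ R = R₂) ∧
    (t < tc → ∀ R : ℝ, 0 < R → deriv V R ≠ 0) ∧
    (t = 0 → ∀ R : ℝ, 0 < R → (deriv V R = 0 ↔ R = 1)) := by
  have hπ3 : (0:ℝ) < Real.pi ^ 3 := by positivity
  have hσ0 : 0 < σ := by rw [hσ]; positivity
  obtain ⟨a, ha_def⟩ : ∃ a : ℝ, a = (5:ℝ) ^ (-(1:ℝ)/4) := ⟨_, rfl⟩
  have ha : 0 < a := ha_def ▸ Real.rpow_pos_of_pos (by norm_num) _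
  have ha4 : a ^ 4 = 1/5 := by
    rw [ha_def, ← Real.rpow_natCast ((5:ℝ) ^ (-(1:ℝ)/4)) 4,
      ← Real.rpow_mul (by norm_num : (0:ℝ) ≤ 5)]
    norm_num
  have ha1 : a < 1 := by nlinarith [sq_nonneg (a-1), sq_nonneg (a+1), sq_nonneg (a^2-1)]
  obtain ⟨c, hc_def⟩ : ∃ c : ℝ, c = 3 * σ * t := ⟨_, rfl⟩
  -- value of 3σtc
  have h5a : a^5 = a/5 := by
    have h5 : a^5 = a * a^4 := by ring
    rw [h5, ha4]; ring
  have hctc : 3 * σ * tc = -4 * a^5 := by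
    rw [hσ, htc, ← ha_def, h5a]
    field_simp
    ring
  have hfa : a^5 - a = -4*a^5 := by
    have h5 : a^5 = a * a^4 := by ring
    nlinarith [h5, ha4]
  -- derivative formula
  have hderiv : ∀ R : ℝ, R ≠ 0 → deriv V R = R - 1/R^3 - 3*σ*t/R^4 := by
    intro R hR
    have hVf : V = fun R => 1/(2*R^2) + R^2/2 + σ*t/R^3 := by
      funext x; rw [hV x]
    subst hVf
    have h2R : (2 * R^2 : ℝ) ≠ 0 := mul_ne_zero two_ne_zero (pow_ne_zero 2 hR)
    have hR3 : (R^3 : ℝ) ≠ 0 := pow_ne_zero 3 hR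
    have hg : HasDerivAt (fun x : ℝ => 2*x^2) (4*R) (R) := by
      have := (hasDerivAt_pow 2 R).const_mul (2:ℝ)
      exact this.congr_deriv (by norm_num; ring)
    have h1 : HasDerivAt (fun x : ℝ => 1/(2*x^2))
        ((0 * (2*R^2) - 1 * (4*R)) / (2*R^2)^2) R :=
      (hasDerivAt_const R (1:ℝ)).div hg h2R
    have h2 : HasDerivAt (fun x : ℝ => x^2/2) R R := by
      have := (hasDerivAt_pow 2 R).div_const (2:ℝ)
      exact this.congr_deriv (by norm_num)
    have hg3 : HasDerivAt (fun x : ℝ => x^3) (3*R^2) R := by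
      have := hasDerivAt_pow 3 R
      exact this.congr_deriv (by norm_num)
    have h3 : HasDerivAt (fun x : ℝ => σ*t/x^3)
        ((0 * R^3 - σ*t * (3*R^2)) / (R^3)^2) R :=
      (hasDerivAt_const R (σ*t)).div hg3 hR3
    rw [show deriv (fun x : ℝ => 1/(2*x^2) + x^2/2 + σ*t/x^3) R = _ from ((h1.add h2).add h3).deriv]
    field_simp
    ring
  -- stationarity ↔ quintic equation
  have hstat : ∀ R : ℝ, 0 < R → (deriv V R = 0 ↔ R^5 - R = c) := by
    intro R hR
    rw [hderiv R hR.ne']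
    have hR4 : (R^4 : ℝ) ≠ 0 := pow_ne_zero 4 hR.ne'
    have key : R - 1/R^3 - 3*σ*t/R^4 = (R^5 - R - c) / R^4 := by
      rw [hc_def]; field_simp
    rw [key, div_eq_zero_iff]
    constructor
    · rintro (h | h)
      · linarith
      · exact absurd h hR4
    · intro h; left; linarith
  have hanti := quintic_anti ha ha4
  have hmono := quintic_mono ha ha4
  have hcont : Continuous (fun R : ℝ => R^5 - R) := by continuity
  refine ⟨?_, ?_, ?_, ?_⟩
  · -- (i) t > 0
    intro ht
    have hc0 : 0 < c := by rw [hc_def]; positivity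
    -- existence via IVT on [1, c+2]
    set M : ℝ := c + 2 with hM_def
    have hM2 : (2:ℝ) ≤ M := by linarith
    have hM5 : c ≤ M^5 - M := by nlinarith [sq_nonneg M, sq_nonneg (M-2), sq_nonneg (M^2-1)]
    have hsub := intermediate_value_Icc (by linarith : (1:ℝ) ≤ M) hcont.continuousOn
    have hmem : c ∈ Set.Icc ((fun R : ℝ => R^5 - R) 1) ((fun R : ℝ => R^5 - R) M) := by
      constructor <;> simp <;> linarith
    obtain ⟨R, hRmem, hfR⟩ := hsub hmem
    have hR1 : 1 ≤ R := hRmem.1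
    have hR0 : 0 < R := by linarith
    refine ⟨R, ⟨hR0, (hstat R hR0).mpr hfR⟩, ?_⟩
    rintro y ⟨hy0, hdy⟩
    have hfy : y^5 - y = c := (hstat y hy0).mp hdy
    -- y > 1 since c > 0
    have hy1 : 1 ≤ y := by
      by_contra h
      push_neg at h
      have h4 : y^4 < 1 := pow_lt_one₀ hy0.le h (by norm_num)
      nlinarith
    exact hmono.injOn (Set.mem_Ici.mpr (le_trans ha1.le hy1))
      (Set.mem_Ici.mpr (le_trans ha1.le hR1))
      (show y^5 - y = R^5 - R by rw [hfy]; exact hfR.symm)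
  · -- (ii) tc < t < 0
    intro ht1 ht2
    have hc0 : c < 0 := by
      rw [hc_def]; nlinarith
    have hcmin : -4*a^5 < c := by
      rw [← hctc, hc_def]
      nlinarith
    -- first root in (0, a)
    obtain ⟨ε, hε_def⟩ : ∃ ε : ℝ, ε = min (a/2) (-c/2) := ⟨_, rfl⟩
    have hε0 : 0 < ε := hε_def ▸ lt_min (by linarith) (by linarith)
    have hεa : ε < a := hε_def ▸ lt_of_le_of_lt (min_le_left _ _) (by linarith)
    have hfε : c < ε^5 - ε := by
      have h1 : ε ≤ -c/2 := hε_def ▸ min_le_right _ _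
      nlinarith [pow_pos hε0 5]
    have hsub1 := intermediate_value_Icc' hεa.le hcont.continuousOn
    have hmem1 : c ∈ Set.Icc ((fun R : ℝ => R^5 - R) a) ((fun R : ℝ => R^5 - R) ε) := by
      constructor <;> simp only
      · rw [hfa]; linarith
      · linarith
    obtain ⟨R₁, hR₁mem, hfR₁⟩ := hsub1 hmem1
    have hR₁0 : 0 < R₁ := lt_of_lt_of_le hε0 hR₁mem.1
    have hR₁a : R₁ < a := by
      rcases lt_or_eq_of_le hR₁mem.2 with h | h
      · exact h
      · exfalso; rw [h] at hfR₁; simp only at hfR₁; rw [hfa] at hfR₁; linarith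
    -- second root in (a, 1)
    have hsub2 := intermediate_value_Icc ha1.le hcont.continuousOn
    have hmem2 : c ∈ Set.Icc ((fun R : ℝ => R^5 - R) a) ((fun R : ℝ => R^5 - R) 1) := by
      constructor <;> simp only
      · rw [hfa]; linarith
      · norm_num; linarith
    obtain ⟨R₂, hR₂mem, hfR₂⟩ := hsub2 hmem2
    have hR₂a : a < R₂ := by
      rcases lt_or_eq_of_le hR₂mem.1 with h | h
      · exact h
      · exfalso; rw [← h] at hfR₂; simp only at hfR₂; rw [hfa] at hfR₂; linarith
    have hR₂0 : 0 < R₂ := lt_trans ha hR₂a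
    refine ⟨R₁, R₂, hR₁0, hR₂0, by linarith, (hstat R₁ hR₁0).mpr hfR₁,
      (hstat R₂ hR₂0).mpr hfR₂, ?_⟩
    intro R hR0 hdR
    have hfR : R^5 - R = c := (hstat R hR0).mp hdR
    have hRa : R ≠ a := by
      intro h
      rw [h, hfa] at hfR; linarith
    rcases lt_or_gt_of_ne hRa with h | h
    · left
      exact hanti.injOn (Set.mem_Icc.mpr ⟨hR0.le, h.le⟩)
        (Set.mem_Icc.mpr ⟨hR₁0.le, hR₁a.le⟩) (show R^5 - R = R₁^5 - R₁ by rw [hfR]; exact hfR₁.symm)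
    · right
      exact hmono.injOn (Set.mem_Ici.mpr h.le) (Set.mem_Ici.mpr hR₂a.le)
        (show R^5 - R = R₂^5 - R₂ by rw [hfR]; exact hfR₂.symm)
  · -- (iii) t < tc
    intro ht R hR0 hdR
    have hfR : R^5 - R = c := (hstat R hR0).mp hdR
    have hcmin : c < -4*a^5 := by
      rw [← hctc, hc_def]; nlinarith
    have := quintic_min ha ha4 hR0
    linarith
  · -- (iv) t = 0
    intro ht R hR0
    have hc0 : c = 0 := by rw [hc_def, ht]; ring
    rw [hstat R hR0, hc0]
    constructor
    · intro h
      have h4 : R^4 = 1 := by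
        have : R * R^4 = R * 1 := by nlinarith
        exact mul_left_cancel₀ hR0.ne' this
      rcases lt_trichotomy R 1 with h1 | h1 | h1
      · exfalso; nlinarith [pow_pos hR0 2, pow_pos hR0 3]
      · exact h1
      · exfalso
        have h2 : 1 < R^2 := by nlinarith
        nlinarith
    · intro h; rw [h]; ring
end

section
/- Let σ = 1024/(2835·π³), let t_c = −(189·π³/256)·5^{−1/4}, and let V(R) = 1/(2R²) + R²/2 + σ·t_c/R³ on (0, ∞). Then at R = 5^{−1/4} one has V′(5^{−1/4}) = 0 and V(5^{−1/4}) = √5/3. -/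
/-- The effective potential at criticality: with `σ = 1024/(2835π³)`,
`t_c = −(189π³/256)·5^{−1/4}` and `V(R) = 1/(2R²) + R²/2 + σ·t_c/R³`, the point
`R = 5^{−1/4}` is stationary, `V′(5^{−1/4}) = 0`, and `V(5^{−1/4}) = √5/3`. -/
theorem critical_potential_value (σ tc : ℝ)
    (hσ : σ = 1024 / (2835 * Real.pi ^ 3))
    (htc : tc = -(189 * Real.pi ^ 3 / 256) * (5 : ℝ) ^ (-(1 : ℝ) / 4))
    (V : ℝ → ℝ) (hV : ∀ R : ℝ, V R = 1 / (2 * R ^ 2) + R ^ 2 / 2 + σ * tc / R ^ 3) :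
    deriv V ((5 : ℝ) ^ (-(1 : ℝ) / 4)) = 0 ∧
      V ((5 : ℝ) ^ (-(1 : ℝ) / 4)) = Real.sqrt 5 / 3 := by
  set r : ℝ := (5 : ℝ) ^ (-(1 : ℝ) / 4) with hr
  have hrpos : 0 < r := Real.rpow_pos_of_pos (by norm_num) _
  have hr0 : r ≠ 0 := ne_of_gt hrpos
  have hr4 : r ^ 4 = 1 / 5 := by
    rw [hr, ← Real.rpow_natCast ((5:ℝ) ^ (-(1:ℝ)/4)) 4, ← Real.rpow_mul (by norm_num)]
    norm_num
  have hπ : (Real.pi) ^ 3 ≠ 0 := pow_ne_zero _ Real.pi_ne_zero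
  have hc : σ * tc = -(4 / 15) * r := by
    rw [hσ, htc, hr]; field_simp; ring
  have hVfun : V = fun R => 1 / (2 * R ^ 2) + R ^ 2 / 2 + σ * tc / R ^ 3 := funext hV
  have hr2 : r ^ 2 = (Real.sqrt 5)⁻¹ := by
    rw [hr, ← Real.rpow_natCast ((5:ℝ) ^ (-(1:ℝ)/4)) 2, ← Real.rpow_mul (by norm_num),
      Real.sqrt_eq_rpow, ← Real.rpow_neg (by norm_num)]
    norm_num
  have h5 : (0:ℝ) < Real.sqrt 5 := Real.sqrt_pos.2 (by norm_num)
  have hs : Real.sqrt 5 ^ 2 = 5 := Real.sq_sqrt (by norm_num)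
  constructor
  · rw [hVfun]
    have h1 : HasDerivAt (fun R : ℝ => 2 * R ^ 2) (2 * (2 * r ^ 1)) r :=
      (hasDerivAt_pow 2 r).const_mul 2
    have h2 := (hasDerivAt_const r (1:ℝ)).div h1 (by positivity)
    have h3 := (hasDerivAt_pow 2 r).div_const 2
    have h4 := (hasDerivAt_const r (σ * tc)).div (hasDerivAt_pow 3 r) (pow_ne_zero 3 hr0)
    have hd := (h2.add h3).add h4
    rw [show (fun R : ℝ => 1 / (2 * R ^ 2) + R ^ 2 / 2 + σ * tc / R ^ 3) = ((((fun _ => (1:ℝ)) / fun R : ℝ => 2 * R ^ 2) + fun x : ℝ => x ^ 2 / 2) + (fun _ => σ * tc) / fun x : ℝ => x ^ 3) from rfl, hd.deriv, hc]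
    field_simp
    linear_combination (30 * r ^ 2) * hr4
  · rw [hV, hc]
    have h3 : r ^ 3 = r * r ^ 2 := by ring
    rw [h3, hr2]
    field_simp
    nlinarith [hs, h5]
end
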